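/- Let G be a finite group, m ≥ 1, and ρ_1, …, ρ_m irreducible representations of G on nonzero finite-dimensional complex vector spaces, with characters χ_1, …, χ_m. Let ψ_j : Z(G) → ℂ^× be the homomorphisms on the center Z(G) determined by ρ_j(z) = ψ_j(z)·id for z ∈ Z(G). Assume (i) for every h ≠ 1 in G there is j with ρ_j(h) ≠ id, and (ii) the characters ψ_j·ψ_1⁻¹ (j = 1, …, m) generate the full character group Hom(Z(G), ℂ^×). Define Φ : G → ℂ^({1,…,m} × G) by Φ(h)(j, g) := Σ_{γ∈G} χ_j(g h⁻¹ γ)·χ_j(γ⁻¹). Then for all h, k ∈ G and λ ∈ ℂ: if Φ(h)(j, g) = λ·Φ(k)(j, g) for every j and every g ∈ G, then h = k. -/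

import Mathlib

/-!
Write `χ_j` for the character of `ρ_j` and `c_j = |G| / dim ρ_j`. By Schur's lemma and the
orthogonality of irreducible characters, `∑_γ χ_j(γ⁻¹) ρ_j(γ) = c_j • 1`, so
`Φ(h)(j, g) = c_j χ_j(g h⁻¹)`. Hence `Φ h = l • Φ k` says `χ_j(x) = l χ_j(x a)` for all `x`,
where `a = h k⁻¹`; translating the same sum by `a` then gives `l • ρ_j(a) = 1` for every `j`.
So `a` acts by scalars in every `ρ_j`, which by faithfulness puts it in the centre, and there
`ψ_j(a) = l⁻¹` for every `j`. Then every `ψ_j ψ_1⁻¹` is trivial at `a`, hence so is every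
character of the centre, and `a = 1`.
-/

open Module

theorem MonoidHom.eq_of_forall_apply_eq {ι G : Type*} [Group G] {M : ι → Type*}
    [∀ i, Monoid (M i)] (f : ∀ i, G →* M i) (hf : ∀ g : G, g ≠ 1 → ∃ i, f i g ≠ 1) {x y : G}
    (hxy : ∀ i, f i x = f i y) : x = y := by
  by_contra hne
  obtain ⟨i, hi⟩ := hf (x⁻¹ * y) (by rwa [Ne, inv_mul_eq_one])
  exact hi (by rw [map_mul, ← hxy i, ← map_mul, inv_mul_cancel, map_one])

theorem Subgroup.mem_center_of_forall_eq_smul_one {ι k G : Type*} [CommSemiring k] [Group G]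
    {V : ι → Type*} [∀ i, AddCommMonoid (V i)] [∀ i, Module k (V i)]
    (ρ : ∀ i, Representation k G (V i)) (hρ : ∀ g : G, g ≠ 1 → ∃ i, ρ i g ≠ 1) {a : G}
    (ha : ∀ i, ∃ c : k, ρ i a = c • 1) : a ∈ Subgroup.center G := by
  refine Subgroup.mem_center_iff.mpr fun g => MonoidHom.eq_of_forall_apply_eq ρ hρ fun i => ?_
  obtain ⟨c, hc⟩ := ha i
  rw [map_mul, map_mul, hc, smul_one_mul, mul_smul_one]

theorem CommGroup.eq_one_of_closure_eq_top {A M : Type*} [CommGroup A] [Finite A] [CommMonoid M]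
    [HasEnoughRootsOfUnity M (Monoid.exponent A)] {S : Set (A →* Mˣ)}
    (hS : Subgroup.closure S = ⊤) {a : A} (ha : ∀ φ ∈ S, φ a = 1) : a = 1 := by
  by_contra hne
  obtain ⟨φ, hφ⟩ := CommGroup.exists_apply_ne_one_of_hasEnoughRootsOfUnity A M hne
  have hle : Subgroup.closure S ≤ (MonoidHom.eval a).ker := Subgroup.closure_le _ |>.mpr ha
  exact hφ (hle (hS ▸ Subgroup.mem_top φ))

namespace Representation

variable {k G V : Type*} [Field k] [Group G] [AddCommGroup V] [Module k V]

theorem isIrreducible_of_forall_submodule [Nontrivial V] (ρ : Representation k G V)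
    (h : ∀ p : Submodule k V, (∀ g : G, ∀ x ∈ p, ρ g x ∈ p) → p = ⊥ ∨ p = ⊤) :
    ρ.IsIrreducible where
  exists_pair_ne := ⟨⊥, ⊤, fun hbt => bot_ne_top (congrArg Subrepresentation.toSubmodule hbt)⟩
  eq_bot_or_eq_top σ := (h σ.toSubmodule fun g _ hx => σ.apply_mem_toSubmodule g hx).imp
    (Subrepresentation.toSubmodule_injective ·) (Subrepresentation.toSubmodule_injective ·)

namespace IsIrreducible

theorem nontrivial (ρ : Representation k G V) [ρ.IsIrreducible] : Nontrivial V :=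
  IsSimpleModule.nontrivial (MonoidAlgebra k G) ρ.asModule

theorem natCard_div_finrank_ne_zero [CharZero k] [Finite G] [FiniteDimensional k V]
    (ρ : Representation k G V) [ρ.IsIrreducible] : (Nat.card G / finrank k V : k) ≠ 0 :=
  have := nontrivial ρ
  div_ne_zero (Nat.cast_ne_zero.mpr Nat.card_pos.ne') (Nat.cast_ne_zero.mpr finrank_pos.ne')

variable (ρ : Representation k G V) [ρ.IsIrreducible] [FiniteDimensional k V] [IsAlgClosed k]

theorem exists_eq_smul_one (f : V →ₗ[k] V) (hf : ∀ g, ρ g * f = f * ρ g) :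
    ∃ μ : k, f = μ • 1 := by
  obtain ⟨μ, hμ⟩ :=
    (algebraMap_intertwiningMap_bijective_of_isAlgClosed (ρ := ρ)).2 ⟨f, fun g => (hf g).symm⟩
  exact ⟨μ, congrArg IntertwiningMap.toLinearMap hμ.symm⟩

variable [CharZero k] [Fintype G]

theorem sum_character_mul_character_inv :
    ∑ g : G, ρ.character g * ρ.character g⁻¹ = Nat.card G := by
  have hG : (Nat.card G : k) ≠ 0 := Nat.cast_ne_zero.mpr Nat.card_pos.ne'
  have : Invertible (Nat.card G : k) := invertibleOfNonzero hG
  have h := char_orthonormal ρ ρ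
  rw [if_pos ⟨Equiv.refl ρ⟩, inv_mul_eq_one₀ hG] at h
  exact h.symm

theorem sum_character_inv_smul_eq :
    ∑ g : G, ρ.character g⁻¹ • ρ g = (Nat.card G / finrank k V : k) • 1 := by
  set Q := ∑ g : G, ρ.character g⁻¹ • ρ g
  have hQ : ∀ h, ρ h * Q = Q * ρ h := fun h => by
    simp only [Q, Finset.mul_sum, Finset.sum_mul]
    refine Fintype.sum_equiv (MulAut.conj h).toEquiv _ _ fun γ => ?_
    rw [MulEquiv.toEquiv_eq_coe, MulEquiv.coe_toEquiv, MulAut.conj_apply, mul_smul_comm,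
      smul_mul_assoc, ← map_mul, ← map_mul, inv_mul_cancel_right, conj_inv, char_conj]
  obtain ⟨μ, hμ⟩ := exists_eq_smul_one ρ Q hQ
  have htrace : μ * finrank k V = Nat.card G := by
    have := congrArg (LinearMap.trace k V) hμ
    rw [map_smul, LinearMap.trace_one, smul_eq_mul, map_sum] at this
    rw [← this, ← sum_character_mul_character_inv ρ]
    simp only [map_smul, smul_eq_mul, character, mul_comm]
  have hd : (finrank k V : k) ≠ 0 :=
    right_ne_zero_of_mul (htrace ▸ Nat.cast_ne_zero.mpr Nat.card_pos.ne')
  rw [hμ, eq_div_of_mul_eq hd htrace]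

theorem sum_character_mul_mul_character_inv (b : G) :
    ∑ γ : G, ρ.character (b * γ) * ρ.character γ⁻¹
      = (Nat.card G / finrank k V : k) * ρ.character b := by
  calc ∑ γ : G, ρ.character (b * γ) * ρ.character γ⁻¹
      = LinearMap.trace k V (ρ b * ∑ γ : G, ρ.character γ⁻¹ • ρ γ) := by
        simp only [Finset.mul_sum, map_sum, mul_smul_comm, map_smul, ← map_mul, smul_eq_mul,
          character, mul_comm]
    _ = (Nat.card G / finrank k V : k) * ρ.character b := by
        rw [sum_character_inv_smul_eq, mul_smul_comm, mul_one, map_smul, smul_eq_mul, character]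

theorem smul_eq_one_of_character_eq_mul {a : G} {l : k}
    (h : ∀ x, ρ.character x = l * ρ.character (x * a)) : l • ρ a = 1 := by
  have hshift : ∑ γ : G, ρ.character γ⁻¹ • ρ γ = l • (ρ a * ∑ γ : G, ρ.character γ⁻¹ • ρ γ) := by
    rw [Finset.mul_sum, Finset.smul_sum]
    refine (Fintype.sum_equiv (Equiv.mulLeft a) _ _ fun γ => ?_).symm
    rw [Equiv.coe_mulLeft, mul_smul_comm, ← map_mul, smul_smul, mul_inv_rev, h (γ⁻¹ * a⁻¹),
      inv_mul_cancel_right]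
  rw [sum_character_inv_smul_eq, mul_smul_comm, mul_one, smul_comm] at hshift
  exact (smul_right_injective _ (natCard_div_finrank_ne_zero ρ) hshift).symm

end IsIrreducible

end Representation

/-- Proposition 2.13: let `ρ_1, …, ρ_m` be irreducible representations of a finite
group `G` on nonzero finite-dimensional complex vector spaces, with characters `χ_j`
and central characters `ψ_j`.  Assume (i) `⋂ ker ρ_j = 1` and (ii) the ratios
`ψ_j ψ_1⁻¹` generate the character group of the center.  Then the map
`Φ h (j, g) = ∑_γ χ_j (g h⁻¹ γ)·χ_j (γ⁻¹)` projectively separates the points of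
`(G × G)/G ≅ G`: if `Φ h = λ · Φ k` then `h = k`. -/
theorem coset_space_projective_embedding
    {G : Type*} [Group G] [Fintype G] {m : ℕ} (hm : 0 < m)
    (W : Fin m → Type*) [∀ j, AddCommGroup (W j)] [∀ j, Module ℂ (W j)]
    [∀ j, FiniteDimensional ℂ (W j)] [∀ j, Nontrivial (W j)]
    (ρ : ∀ j, Representation ℂ G (W j))
    (hirr : ∀ j, ∀ p : Submodule ℂ (W j),
      (∀ g : G, ∀ x ∈ p, ρ j g x ∈ p) → p = ⊥ ∨ p = ⊤)
    (ψ : Fin m → (↥(Subgroup.center G) →* ℂˣ))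
    (hψ : ∀ j, ∀ z : ↥(Subgroup.center G),
      ρ j (z : G) = ((ψ j z : ℂ) • (1 : W j →ₗ[ℂ] W j)))
    (hfaith : ∀ h : G, h ≠ 1 → ∃ j, ρ j h ≠ 1)
    (hcenter : Subgroup.closure
      (Set.range fun j : Fin m => ψ j * (ψ ⟨0, hm⟩)⁻¹) = ⊤) :
    ∀ h k : G, ∀ l : ℂ,
      (∀ j : Fin m, ∀ g : G,
        (∑ γ : G, LinearMap.trace ℂ (W j) (ρ j (g * h⁻¹ * γ))
            * LinearMap.trace ℂ (W j) (ρ j γ⁻¹))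
          = l * ∑ γ : G, LinearMap.trace ℂ (W j) (ρ j (g * k⁻¹ * γ))
            * LinearMap.trace ℂ (W j) (ρ j γ⁻¹)) → h = k := by
  intro h k l hΦ
  have := fun j => (ρ j).isIrreducible_of_forall_submodule (hirr j)
  have hχ : ∀ j x, (ρ j).character x = l * (ρ j).character (x * (h * k⁻¹)) := fun j x => by
    have hconv := Representation.IsIrreducible.sum_character_mul_mul_character_inv (ρ j)
    simp only [Representation.character] at hconv ⊢
    have := hΦ j (x * h)
    rw [hconv, hconv, mul_inv_cancel_right, mul_left_comm l] at this
    rw [← mul_assoc]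
    exact mul_left_cancel₀ (Representation.IsIrreducible.natCard_div_finrank_ne_zero (ρ j)) this
  have hscalar : ∀ j, l • ρ j (h * k⁻¹) = 1 := fun j =>
    Representation.IsIrreducible.smul_eq_one_of_character_eq_mul (ρ j) (hχ j)
  have hl : l ≠ 0 := by
    rintro rfl
    simpa using hscalar ⟨0, hm⟩
  have ha : h * k⁻¹ ∈ Subgroup.center G :=
    Subgroup.mem_center_of_forall_eq_smul_one ρ hfaith fun j =>
      ⟨l⁻¹, by rw [← hscalar j, smul_smul, inv_mul_cancel₀ hl, one_smul]⟩
  have hψa : ∀ j, l * (ψ j ⟨_, ha⟩ : ℂ) = 1 := fun j => by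
    have := hscalar j
    rw [show ρ j (h * k⁻¹) = _ from hψ j ⟨_, ha⟩, smul_smul] at this
    exact smul_left_injective ℂ one_ne_zero (this.trans (one_smul ℂ 1).symm)
  have hz : (⟨h * k⁻¹, ha⟩ : Subgroup.center G) = 1 := by
    have : NeZero (Monoid.exponent (Subgroup.center G)) := ⟨Monoid.exponent_ne_zero_of_finite⟩
    open scoped IsMulCommutative in
    refine CommGroup.eq_one_of_closure_eq_top hcenter ?_
    rintro _ ⟨j, rfl⟩
    rw [MonoidHom.mul_apply, MonoidHom.inv_apply, mul_inv_eq_one]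
    exact Units.ext (mul_left_cancel₀ hl ((hψa j).trans (hψa ⟨0, hm⟩).symm))
  exact mul_inv_eq_one.mp (congrArg Subtype.val hz)
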